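/- Let $\mathcal{P}$ be a finite set of points in the plane with distinct $x$- and $y$-coordinates, and let $R = [0,\delta] \times [a,b]$ be a rectangle. Then every chain of $\mathrm{BST}(\mathcal{P} \cap R)$ is also a chain of $\mathrm{BST}(\mathcal{P})$; consequently $h(\mathrm{BST}(\mathcal{P} \cap R)) \le h(\mathrm{BST}(\mathcal{P}))$. -/

import Mathlib

/-- Binary trees with real labels. -/
inductive BTree where
  | leaf : BTree
  | node : BTree → ℝ → BTree → BTree

namespace BTree

/-- Insertion of a value into a binary search tree. -/
noncomputable def insert (x : ℝ) : BTree → BTree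
  | leaf => node leaf x leaf
  | node l y r => if x < y then node (insert x l) y r else node l y (insert x r)

/-- Number of nodes. -/
def size : BTree → ℕ
  | leaf => 0
  | node l _ r => size l + 1 + size r

/-- Number of nodes on a longest root-to-leaf path. -/
def depth : BTree → ℕ
  | leaf => 0
  | node l _ r => 1 + max (depth l) (depth r)

/-- Height: maximal number of edges from the root to a leaf (`-1` for the empty tree). -/
def height (t : BTree) : ℤ := (depth t : ℤ) - 1

/-- The value `x` is a label of the tree. -/
def Mem (x : ℝ) : BTree → Prop
  | leaf => False
  | node l y r => x = y ∨ Mem x l ∨ Mem x r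

/-- The node labeled `a` is a (strict) ancestor of the node labeled `b`. -/
def IsAncestor (a b : ℝ) : BTree → Prop
  | leaf => False
  | node l y r => (a = y ∧ (Mem b l ∨ Mem b r)) ∨ IsAncestor a b l ∨ IsAncestor a b r

/-- A set of labels is a chain if any two of its nodes are comparable for the
ancestor relation. -/
def IsChain (t : BTree) (C : Set ℝ) : Prop :=
  ∀ a ∈ C, ∀ b ∈ C, a = b ∨ IsAncestor a b t ∨ IsAncestor b a t

end BTree

/-- The binary search tree obtained by inserting the elements of a list in order. -/
noncomputable def bstOfList (l : List ℝ) : BTree := l.foldl (fun t x => t.insert x) .leaf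

/-- The BST of a list of planar points, already sorted by increasing `x`-coordinate:
insert the `y`-coordinates in order. -/
noncomputable def bstOfSortedPts (l : List (ℝ × ℝ)) : BTree := bstOfList (l.map Prod.snd)

open scoped Classical in
/-- The BST of a finite set of planar points, given as a list: sort the points by
increasing `x`-coordinate and insert the `y`-coordinates in this order. -/
noncomputable def bstOfPts (l : List (ℝ × ℝ)) : BTree :=
  bstOfSortedPts (l.mergeSort (fun p q => decide (p.1 ≤ q.1)))

open scoped Classical in
/-- Length of a longest increasing subsequence of `f`. -/
noncomputable def lisLen {n : ℕ} {β : Type*} [Preorder β] (f : Fin n → β) : ℕ :=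
  Finset.univ.sup fun s : Finset (Fin n) => if StrictMonoOn f ↑s then s.card else 0

open scoped Classical in
/-- Length of a longest decreasing subsequence of `f`. -/
noncomputable def ldsLen {n : ℕ} {β : Type*} [Preorder β] (f : Fin n → β) : ℕ :=
  Finset.univ.sup fun s : Finset (Fin n) => if StrictAntiOn f ↑s then s.card else 0

/-!
Induct on the points in order of `x`-coordinate. If the first point `q` lies in `R`, both trees
have root `q.2` and the claim passes to the two subtrees. Otherwise either `q.1 > δ`, and then no
later point lies in `R`, or `q.2 ∉ [a, b]`, and then all `y`-values of `P ∩ R` lie on one side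
of `q.2`, so `BST(P ∩ R)` is built inside a single subtree of the root of `BST(P)`. Hence
`BST(P ∩ R)` arises from `BST(P)` by contracting nodes, which preserves the ancestor relation
and cannot increase the depth.
-/

namespace BTree

/-- `Embeds s t`: `s` is obtained from `t` by repeatedly replacing a subtree by one of the two
subtrees of its root, and by pruning subtrees to leaves. -/
inductive Embeds : BTree → BTree → Prop
  | leaf (t : BTree) : Embeds leaf t
  | node {l' r' l r : BTree} (x : ℝ) :
      Embeds l' l → Embeds r' r → Embeds (node l' x r') (node l x r)
  | left {s l r : BTree} (x : ℝ) : Embeds s l → Embeds s (node l x r)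
  | right {s l r : BTree} (x : ℝ) : Embeds s r → Embeds s (node l x r)

namespace Embeds

variable {s t : BTree}

theorem mem (h : Embeds s t) {x : ℝ} (hx : Mem x s) : Mem x t := by
  induction h with
  | leaf => exact hx.elim
  | node y _ _ ihl ihr => exact hx.imp_right (Or.imp ihl ihr)
  | left y _ ih => exact Or.inr (Or.inl (ih hx))
  | right y _ ih => exact Or.inr (Or.inr (ih hx))

theorem isAncestor (h : Embeds s t) {u v : ℝ} (huv : IsAncestor u v s) :
    IsAncestor u v t := by
  induction h with
  | leaf => exact huv.elim
  | node y hl hr ihl ihr =>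
    rcases huv with ⟨rfl, hv⟩ | hv | hv
    · exact Or.inl ⟨rfl, hv.imp hl.mem hr.mem⟩
    · exact Or.inr (Or.inl (ihl hv))
    · exact Or.inr (Or.inr (ihr hv))
  | left y _ ih => exact Or.inr (Or.inl (ih huv))
  | right y _ ih => exact Or.inr (Or.inr (ih huv))

theorem isChain (h : Embeds s t) {C : Set ℝ} (hC : IsChain s C) : IsChain t C :=
  fun u hu v hv => (hC u hu v hv).imp_right (Or.imp h.isAncestor h.isAncestor)

theorem depth_le (h : Embeds s t) : s.depth ≤ t.depth := by
  induction h with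
  | leaf => exact Nat.zero_le _
  | node => simp only [depth]; omega
  | left => simp only [depth]; omega
  | right => simp only [depth]; omega

end Embeds

theorem foldl_insert_node (l : List ℝ) (L R : BTree) (y : ℝ) :
    l.foldl (fun t x => t.insert x) (node L y R) =
      node ((l.filter fun x => x < y).foldl (fun t x => t.insert x) L) y
        ((l.filter fun x => ¬ x < y).foldl (fun t x => t.insert x) R) := by
  induction l generalizing L R with
  | nil => rfl
  | cons x l ih =>
    by_cases h : x < y
    · simp [insert, ih, h]
    · simp [insert, ih, h, not_lt.mp h]

end BTree

open BTree

theorem List.filter_filter_of_imp {α : Type*} {p f : α → Bool} {l : List α}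
    (h : ∀ a ∈ l, p a → f a) : (l.filter f).filter p = l.filter p := by
  rw [List.filter_filter]
  exact List.filter_congr fun a ha => by cases hpa : p a <;> simp [h a ha, hpa]

theorem bstOfSortedPts_cons (p : ℝ × ℝ) (P : List (ℝ × ℝ)) :
    bstOfSortedPts (p :: P) =
      .node (bstOfSortedPts (P.filter fun q => q.2 < p.2)) p.2
        (bstOfSortedPts (P.filter fun q => ¬ q.2 < p.2)) := by
  simp only [bstOfSortedPts, bstOfList, List.map_cons, List.foldl_cons]
  exact (foldl_insert_node _ _ _ _).trans (by simp only [List.filter_map]; rfl)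

theorem embeds_bstOfSortedPts_filter (p : ℝ × ℝ → Bool)
    (hp : ∀ q r s, q.1 < r.1 → p r → p s → q.2 ∈ Set.uIcc r.2 s.2 → p q) :
    ∀ P : List (ℝ × ℝ), P.Pairwise (fun q r => q.1 < r.1) →
      Embeds (bstOfSortedPts (P.filter p)) (bstOfSortedPts P)
  | [], _ => .leaf _
  | q :: P, hqP => by
    obtain ⟨hq, hP⟩ := List.pairwise_cons.mp hqP
    have ihL := embeds_bstOfSortedPts_filter p hp _
      (hP.sublist (List.filter_sublist (p := fun r => r.2 < q.2)))
    have ihR := embeds_bstOfSortedPts_filter p hp _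
      (hP.sublist (List.filter_sublist (p := fun r => ¬ r.2 < q.2)))
    rw [bstOfSortedPts_cons]
    by_cases hpq : p q
    · rw [List.filter_cons_of_pos hpq, bstOfSortedPts_cons,
        ← List.filter_comm p, ← List.filter_comm p]
      exact .node _ ihL ihR
    rw [List.filter_cons_of_neg hpq]
    have one_side : (∀ r ∈ P, p r → r.2 < q.2) ∨ (∀ r ∈ P, p r → ¬ r.2 < q.2) := by
      by_contra! ⟨⟨r, hr, hpr, hrq⟩, ⟨s, hs, hps, hsq⟩⟩
      exact hpq (hp q s r (hq s hs) hps hpr (Set.mem_uIcc.mpr (.inl ⟨hsq.le, hrq⟩)))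
    rcases one_side with h | h
    · rw [← List.filter_filter_of_imp (f := fun r => r.2 < q.2) (by simpa using h)]
      exact .left _ ihL
    · rw [← List.filter_filter_of_imp (f := fun r => ¬ r.2 < q.2) (by simpa using h)]
      exact .right _ ihR
  termination_by P => P.length
  decreasing_by all_goals exact Nat.lt_succ_of_le (List.length_filter_le _ _)

open scoped Classical in
theorem stmt16_general (P : List (ℝ × ℝ)) (hxs : P.Pairwise (fun p q => p.1 < q.1))
    (δ a b : ℝ) :
    (∀ C : Set ℝ,
        BTree.IsChain
          (bstOfSortedPts (P.filter
            (fun q => decide (q.1 ≤ δ ∧ a ≤ q.2 ∧ q.2 ≤ b)))) C →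
        BTree.IsChain (bstOfSortedPts P) C)
    ∧ (bstOfSortedPts (P.filter
          (fun q => decide (q.1 ≤ δ ∧ a ≤ q.2 ∧ q.2 ≤ b)))).height
        ≤ (bstOfSortedPts P).height := by
  have hR : Embeds
      (bstOfSortedPts (P.filter fun q => decide (q.1 ≤ δ ∧ a ≤ q.2 ∧ q.2 ≤ b)))
      (bstOfSortedPts P) := by
    refine embeds_bstOfSortedPts_filter _ (fun q r s hqr hr hs hq => ?_) P hxs
    simp only [decide_eq_true_eq, Set.mem_uIcc] at hr hs hq ⊢
    refine ⟨by linarith, ?_⟩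
    rcases hq with hq | hq <;> constructor <;> linarith
  exact ⟨fun C => hR.isChain, by simpa [height] using hR.depth_le⟩

open scoped Classical in
/-- **Chains of the BST of the points in a left rectangle are chains of the full BST.**
For a point set `P` with distinct coordinates and nonnegative `x`-coordinates (listed by
increasing `x`) and a rectangle `R = [0,δ] × [a,b]`, every chain of `BST(P ∩ R)` is a
chain of `BST(P)`; consequently `h(BST(P ∩ R)) ≤ h(BST(P))`. -/
theorem stmt16 (P : List (ℝ × ℝ)) (hxs : P.Pairwise (fun p q => p.1 < q.1))
    (hyd : P.Pairwise (fun p q => p.2 ≠ q.2))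
    (hx0 : ∀ p ∈ P, 0 ≤ p.1)
    (δ a b : ℝ) :
    (∀ C : Set ℝ,
        BTree.IsChain
          (bstOfSortedPts (P.filter
            (fun q => decide (q.1 ≤ δ ∧ a ≤ q.2 ∧ q.2 ≤ b)))) C →
        BTree.IsChain (bstOfSortedPts P) C)
    ∧ (bstOfSortedPts (P.filter
          (fun q => decide (q.1 ≤ δ ∧ a ≤ q.2 ∧ q.2 ≤ b)))).height
        ≤ (bstOfSortedPts P).height :=
  stmt16_general P hxs δ a b
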